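/- Let T > 0, σ > 0, S₀ > 0, K > 0, r ∈ ℝ, and let W be a real random variable distributed according to the Gaussian measure with mean 0 and variance T. Set c = (log(K/S₀) − (r − σ²/2)·T)/σ. Then E[ S₀ · exp(σ·W − σ²T/2) · 1_{W ≥ c} ] = S₀ · Φ(d₁), where d₁ = (1/(σ√T))·(log(S₀/K) + (r + σ²/2)·T). -/

import Mathlib

/-!
Multiplying the `N(0, T)` density by `exp (σ w - σ² T / 2)` yields the `N(σ T, T)` density
(completing the square), so the left-hand side is `S₀ · P(X ≥ c)` for `X ~ N(σ T, T)`.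
Standardizing, `P(X ≥ c) = Φ((σ T - c) / √T)`, and `(σ T - c) / √T = d₁`.
-/

open MeasureTheory ProbabilityTheory Real
open scoped NNReal

/-- The standard normal cumulative distribution function
`Φ(x) = (1/√(2π)) ∫_{-∞}^x e^{-y²/2} dy`. -/
noncomputable def stdNormalCDF (x : ℝ) : ℝ :=
  (Real.sqrt (2 * Real.pi))⁻¹ * ∫ y in Set.Iic x, Real.exp (-y ^ 2 / 2)

lemma gaussianPDFReal_mul_exp (m : ℝ) (v : ℝ≥0) (t x : ℝ) :
    gaussianPDFReal m v x * exp (t * (x - m) - t ^ 2 * v / 2)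
      = gaussianPDFReal (m + t * v) v x := by
  rcases eq_or_ne v 0 with rfl | hv
  · simp [gaussianPDFReal_zero_var]
  simp only [gaussianPDFReal, mul_assoc, ← exp_add]
  congr 2
  field_simp
  ring

lemma integral_exp_mul_gaussianReal {m : ℝ} {v : ℝ≥0} (hv : v ≠ 0) (t : ℝ) (f : ℝ → ℝ) :
    ∫ x, exp (t * (x - m) - t ^ 2 * v / 2) * f x ∂gaussianReal m v
      = ∫ x, f x ∂gaussianReal (m + t * v) v := by
  simp only [integral_gaussianReal_eq_integral_smul hv, smul_eq_mul, ← mul_assoc,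
    gaussianPDFReal_mul_exp]

lemma gaussianReal_real_Iic_eq_stdNormalCDF (d : ℝ) :
    (gaussianReal 0 1).real (Set.Iic d) = stdNormalCDF d := by
  rw [measureReal_def, gaussianReal_apply_eq_integral _ one_ne_zero,
    ENNReal.toReal_ofReal (setIntegral_nonneg measurableSet_Iic
      fun _ _ ↦ gaussianPDFReal_nonneg _ _ _), stdNormalCDF, ← integral_const_mul]
  simp [gaussianPDFReal]

lemma gaussianReal_real_Ici {m : ℝ} {v : ℝ≥0} (hv : v ≠ 0) (c : ℝ) :
    (gaussianReal m v).real (Set.Ici c) = stdNormalCDF ((m - c) / √v) := by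
  have hsv : 0 < √(v : ℝ) := by positivity
  have hmap : (gaussianReal m v).map (fun x ↦ (m - x) / √v) = gaussianReal 0 1 := by
    have hcomp : (fun x ↦ (m - x) / √v) = (· / √v) ∘ (m - ·) := rfl
    rw [hcomp, ← Measure.map_map (by fun_prop) (by fun_prop), gaussianReal_map_const_sub,
      gaussianReal_map_div_const, sub_self, zero_div]
    congr
    ext
    simp [hv]
  have hpre : (fun x ↦ (m - x) / √v) ⁻¹' Set.Iic ((m - c) / √v) = Set.Ici c := by
    ext x
    simp only [Set.mem_preimage, Set.mem_Iic, Set.mem_Ici, div_le_div_iff_of_pos_right hsv]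
    constructor <;> intro <;> linarith
  rw [← gaussianReal_real_Iic_eq_stdNormalCDF, ← hmap, map_measureReal_apply (by fun_prop)
    measurableSet_Iic, hpre]

theorem bsm_stock_part_general (T : NNReal) (hT : 0 < T) (σ S₀ K r : ℝ)
    (hσ : 0 < σ) :
    ∫ w, S₀ * Real.exp (σ * w - σ ^ 2 * T / 2) *
        Set.indicator
          {w : ℝ | (Real.log (K / S₀) - (r - σ ^ 2 / 2) * T) / σ ≤ w}
          (fun _ => (1 : ℝ)) w ∂(gaussianReal 0 T)
      = S₀ * stdNormalCDF ((1 / (σ * Real.sqrt T)) *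
          (Real.log (S₀ / K) + (r + σ ^ 2 / 2) * T)) := by
  set c := (log (K / S₀) - (r - σ ^ 2 / 2) * T) / σ
  have hd : (σ * T - c) / √T = 1 / (σ * √T) * (log (S₀ / K) + (r + σ ^ 2 / 2) * T) := by
    have hlog : log (K / S₀) = -log (S₀ / K) := by rw [← log_inv, inv_div]
    simp only [c, hlog]
    field_simp
    ring
  have hintegrand : (fun w ↦ S₀ * exp (σ * w - σ ^ 2 * T / 2) *
        {w | c ≤ w}.indicator (fun _ ↦ (1 : ℝ)) w)
      = fun w ↦ S₀ * (exp (σ * (w - 0) - σ ^ 2 * T / 2) * (Set.Ici c).indicator 1 w) := by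
    funext w
    rw [sub_zero, mul_assoc]
    rfl
  rw [hintegrand, integral_const_mul, integral_exp_mul_gaussianReal hT.ne',
    integral_indicator_one measurableSet_Ici, gaussianReal_real_Ici hT.ne', zero_add, hd]

/-- The stock-price part of the Black–Scholes–Merton call price:
`E[S₀ e^{σW - σ²T/2} 1_{W ≥ c}] = S₀ Φ(d₁)`. -/
theorem bsm_stock_part (T : NNReal) (hT : 0 < T) (σ S₀ K r : ℝ)
    (hσ : 0 < σ) (hS₀ : 0 < S₀) (hK : 0 < K) :
    ∫ w, S₀ * Real.exp (σ * w - σ ^ 2 * T / 2) *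
        Set.indicator
          {w : ℝ | (Real.log (K / S₀) - (r - σ ^ 2 / 2) * T) / σ ≤ w}
          (fun _ => (1 : ℝ)) w ∂(gaussianReal 0 T)
      = S₀ * stdNormalCDF ((1 / (σ * Real.sqrt T)) *
          (Real.log (S₀ / K) + (r + σ ^ 2 / 2) * T)) :=
  bsm_stock_part_general T hT σ S₀ K r hσ
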